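/- Gauge invariance of the hyperbolic Dirichlet-to-Neumann map: if u solves −Δ_ḡ u + A∇^ḡ u + qu = 0 on M̄ = (0,T)×M with zero initial data and boundary value f, and ψ ∈ C¹(M̄) vanishes on (0,T)×∂M with Δ_ḡ ψ ∈ L^{p₁}(0,T;L^{p₂}(M)), then ũ = e^{ψ/2} u solves the same equation with coefficients Ã = A + d̄ψ and q̃ = q + ½Δ_ḡψ − ½A∇^ḡψ − ¼⟨∇^ḡψ, ∇^ḡψ⟩_ḡ, with the same boundary value f; moreover (∂_ν̄ ũ − (Ãν̄/2)ũ)|_{(0,T)×∂M} = (∂_ν̄ u − (Aν̄/2)u)|_{(0,T)×∂M}, so Λ_{A,q} = Λ_{Ã,q̃}. -/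
import Mathlib


/-- gauge invariance of the hyperbolic DN map, formulated abstractly on a
(Lorentzian) manifold `X` with gradient operator `G`, Laplace–Beltrami operator `Δ`, metric
pairing `B` (so `⟨∇ψ,∇ψ⟩ = B (Gψ) (Gψ)`), one-form represented by the vector field `a`
(`A∇u = B a (Gu)`), and outward normal field `ν` on the lateral boundary `Bdry`. If `u` solves
`−Δu + A∇u + qu = 0` and `ψ` vanishes on the boundary, then `ũ = e^{ψ/2}u` solves the equation
with coefficients `Ã = A + dψ`, `q̃ = q + ½Δψ − ½A∇ψ − ¼⟨∇ψ,∇ψ⟩`, has the same boundary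
values, and `∂_ν ũ − (Ãν/2)ũ = ∂_ν u − (Aν/2)u` on the boundary; hence `Λ_{A,q} = Λ_{Ã,q̃}`. -/
theorem stmt12 {X W : Type*} [AddCommGroup W] [Module ℂ W]
    (G : (X → ℂ) → X → W) (Δ : (X → ℂ) → X → ℂ) (B : X → W → W → ℂ)
    (a ν : X → W) (q ψ u : X → ℂ) (Bdry : Set X)
    (hBadd : ∀ x w₁ w₂ w, B x (w₁ + w₂) w = B x w₁ w + B x w₂ w)
    (hBadd' : ∀ x w w₁ w₂, B x w (w₁ + w₂) = B x w w₁ + B x w w₂)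
    (hBsmul : ∀ x (c : ℂ) w w', B x (c • w) w' = c * B x w w')
    (hBsmul' : ∀ x (c : ℂ) w w', B x w (c • w') = c * B x w w')
    (hBsymm : ∀ x w w', B x w w' = B x w' w)
    (hGmul : ∀ (v w : X → ℂ) x,
      G (fun y => v y * w y) x = v x • G w x + w x • G v x)
    (hΔmul : ∀ (v w : X → ℂ) x,
      Δ (fun y => v y * w y) x = v x * Δ w x + w x * Δ v x + 2 * B x (G v x) (G w x))
    (hGexp : ∀ x, G (fun y => Complex.exp (ψ y / 2)) x
      = (Complex.exp (ψ x / 2) / 2) • G ψ x)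
    (hΔexp : ∀ x, Δ (fun y => Complex.exp (ψ y / 2)) x
      = Complex.exp (ψ x / 2) * ((1/2) * Δ ψ x + (1/4) * B x (G ψ x) (G ψ x)))
    (hu : ∀ x, -Δ u x + B x (a x) (G u x) + q x * u x = 0)
    (hψb : ∀ x ∈ Bdry, ψ x = 0) :
    (∀ x, -Δ (fun y => Complex.exp (ψ y / 2) * u y) x
        + B x (a x + G ψ x) (G (fun y => Complex.exp (ψ y / 2) * u y) x)
        + (q x + (1/2) * Δ ψ x - (1/2) * B x (a x) (G ψ x)
            - (1/4) * B x (G ψ x) (G ψ x)) * (Complex.exp (ψ x / 2) * u x) = 0)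
    ∧ (∀ x ∈ Bdry, Complex.exp (ψ x / 2) * u x = u x)
    ∧ (∀ x ∈ Bdry,
        B x (ν x) (G (fun y => Complex.exp (ψ y / 2) * u y) x)
          - (B x (a x + G ψ x) (ν x) / 2) * (Complex.exp (ψ x / 2) * u x)
        = B x (ν x) (G u x) - (B x (a x) (ν x) / 2) * u x) := by
  refine ⟨?_, ?_, ?_⟩
  · intro x
    simp only [hΔmul, hGmul, hGexp, hΔexp, smul_smul, hBadd, hBadd', hBsmul, hBsmul']
    linear_combination Complex.exp (ψ x / 2) * hu x
  · intro x hx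
    simp [hψb x hx]
  · intro x hx
    simp only [hGmul, hGexp, smul_smul, hBadd, hBadd', hBsmul, hBsmul', hψb x hx,
      zero_div, Complex.exp_zero]
    linear_combination (u x / 2) * hBsymm x (ν x) (G ψ x)
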